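/- Let f_θ : ℝ^d → ℝ be the two-hidden-layer ReLU network f_θ(x) = w₃ᵀ ReLU(W₂ ReLU(W₁ x + b₁) + b₂) + b₃, with W₁ ∈ ℝ^{n₁×d}, b₁ ∈ ℝ^{n₁}, W₂ ∈ ℝ^{n₂×n₁}, b₂ ∈ ℝ^{n₂}, w₃ ∈ ℝ^{n₂}, b₃ ∈ ℝ. Assume f_θ is convex on ℝ^d. Then for every isolated neuron ν of the SECOND hidden layer (i.e. ν ∈ {1,…,n₂} with 𝔛_ν ≠ ∅), the corresponding output weight is nonnegative: w₃[ν] ≥ 0. -/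

import Mathlib

open Set Metric
open scoped RealInnerProductSpace

/-- The ReLU function. -/
noncomputable def relu (t : ℝ) : ℝ := max t 0

/-- The (binary) activation associated to a pre-activation `z` is constant on a set `s`
if the sign condition `0 < z y` is the same for all points of `s`. -/
def ActConstOn {E : Type*} (z : E → ℝ) (s : Set E) : Prop :=
  ∀ y ∈ s, ∀ y' ∈ s, ((0 < z y) ↔ (0 < z y'))

/-- `𝔛 ν`: the set of inputs `x` such that, on every small enough ball around `x`,
the activation of every hidden neuron `μ ≠ ν` is constant while the activation of `ν`
is not constant.  A neuron `ν` is isolated when this set is nonempty. -/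
def Xiso {ι E : Type*} [PseudoMetricSpace E] (z : ι → E → ℝ) (ν : ι) : Set E :=
  {x | ∃ ε₀ > (0 : ℝ), ∀ ε : ℝ, 0 < ε → ε ≤ ε₀ →
    (∀ μ, μ ≠ ν → ActConstOn (z μ) (Metric.ball x ε)) ∧
    ¬ ActConstOn (z ν) (Metric.ball x ε)}

/-- Pre-activation of first-layer neuron `ν`: `z¹_ν(x) = (W₁ x + b₁)_ν`. -/
noncomputable def z1 {d n₁ : ℕ} (W₁ : Fin n₁ → EuclideanSpace ℝ (Fin d)) (b₁ : Fin n₁ → ℝ)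
    (ν : Fin n₁) (x : EuclideanSpace ℝ (Fin d)) : ℝ :=
  ⟪W₁ ν, x⟫ + b₁ ν

/-- Pre-activation of second-layer neuron `μ`: `z²_μ(x) = (W₂ ReLU(W₁ x + b₁) + b₂)_μ`. -/
noncomputable def z2 {d n₁ n₂ : ℕ} (W₁ : Fin n₁ → EuclideanSpace ℝ (Fin d)) (b₁ : Fin n₁ → ℝ)
    (W₂ : Fin n₂ → Fin n₁ → ℝ) (b₂ : Fin n₂ → ℝ)
    (μ : Fin n₂) (x : EuclideanSpace ℝ (Fin d)) : ℝ :=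
  ∑ ν, W₂ μ ν * relu (z1 W₁ b₁ ν x) + b₂ μ

/-- Pre-activations of all hidden neurons (from both hidden layers). -/
noncomputable def zHidden {d n₁ n₂ : ℕ} (W₁ : Fin n₁ → EuclideanSpace ℝ (Fin d))
    (b₁ : Fin n₁ → ℝ) (W₂ : Fin n₂ → Fin n₁ → ℝ) (b₂ : Fin n₂ → ℝ) :
    (Fin n₁ ⊕ Fin n₂) → EuclideanSpace ℝ (Fin d) → ℝ :=
  Sum.elim (z1 W₁ b₁) (z2 W₁ b₁ W₂ b₂)

/-- The two-hidden-layer ReLU network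
`f(x) = w₃ᵀ ReLU(W₂ ReLU(W₁ x + b₁) + b₂) + b₃`. -/
noncomputable def netF {d n₁ n₂ : ℕ} (W₁ : Fin n₁ → EuclideanSpace ℝ (Fin d))
    (b₁ : Fin n₁ → ℝ) (W₂ : Fin n₂ → Fin n₁ → ℝ) (b₂ w₃ : Fin n₂ → ℝ) (b₃ : ℝ)
    (x : EuclideanSpace ℝ (Fin d)) : ℝ :=
  ∑ μ, w₃ μ * relu (z2 W₁ b₁ W₂ b₂ μ x) + b₃

/-- The second-layer activation vector `a₂(x) ∈ {0,1}^{n₂}`. -/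
noncomputable def act2 {d n₁ n₂ : ℕ} (W₁ : Fin n₁ → EuclideanSpace ℝ (Fin d))
    (b₁ : Fin n₁ → ℝ) (W₂ : Fin n₂ → Fin n₁ → ℝ) (b₂ : Fin n₂ → ℝ)
    (x : EuclideanSpace ℝ (Fin d)) (μ : Fin n₂) : ℝ :=
  if 0 < z2 W₁ b₁ W₂ b₂ μ x then 1 else 0

lemma relu_of_pos {t : ℝ} (h : 0 < t) : relu t = t := max_eq_left h.le
lemma relu_of_nonpos {t : ℝ} (h : t ≤ 0) : relu t = 0 := max_eq_right h

/-- Affine along segments within `s`. -/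
def SegAff {E : Type*} [NormedAddCommGroup E] [InnerProductSpace ℝ E]
    (g : E → ℝ) (s : Set E) : Prop :=
  ∀ y ∈ s, ∀ y' ∈ s, ∀ t : ℝ, 0 ≤ t → t ≤ 1 →
    g ((1 - t) • y + t • y') = (1 - t) * g y + t * g y'

lemma segAff_z1 {d n₁ : ℕ} (W₁ : Fin n₁ → EuclideanSpace ℝ (Fin d)) (b₁ : Fin n₁ → ℝ)
    (ν : Fin n₁) (s : Set (EuclideanSpace ℝ (Fin d))) : SegAff (z1 W₁ b₁ ν) s := by
  intro y _ y' _ t _ _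
  simp only [z1, inner_add_right, real_inner_smul_right]
  ring

lemma segAff_relu {E : Type*} [NormedAddCommGroup E] [InnerProductSpace ℝ E]
    {g : E → ℝ} {s : Set E} (hs : Convex ℝ s)
    (hg : SegAff g s) (hc : ActConstOn g s) :
    SegAff (fun y => relu (g y)) s := by
  intro y hy y' hy' t ht0 ht1
  have hmem : (1 - t) • y + t • y' ∈ s := hs hy hy' (by linarith) ht0 (by ring)
  have hgc := hg y hy y' hy' t ht0 ht1
  show relu (g ((1 - t) • y + t • y')) = (1 - t) * relu (g y) + t * relu (g y')
  by_cases hpos : 0 < g y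
  · have h1 : 0 < g y' := (hc y hy y' hy').mp hpos
    have h2 : 0 < g ((1 - t) • y + t • y') := (hc y hy _ hmem).mp hpos
    rw [relu_of_pos h2, relu_of_pos hpos, relu_of_pos h1, hgc]
  · have h1 : ¬ 0 < g y' := fun h => hpos ((hc y hy y' hy').mpr h)
    have h2 : ¬ 0 < g ((1 - t) • y + t • y') := fun h => hpos ((hc y hy _ hmem).mpr h)
    rw [relu_of_nonpos (not_lt.mp h2), relu_of_nonpos (not_lt.mp hpos),
      relu_of_nonpos (not_lt.mp h1)]
    ring

lemma segAff_sum {E : Type*} [NormedAddCommGroup E] [InnerProductSpace ℝ E]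
    {ι : Type*} (S : Finset ι) (c : ι → ℝ) (b : ℝ) (f : ι → E → ℝ) {s : Set E}
    (h : ∀ i ∈ S, SegAff (f i) s) :
    SegAff (fun y => ∑ i ∈ S, c i * f i y + b) s := by
  intro y hy y' hy' t ht0 ht1
  have hcong : ∀ i ∈ S, c i * f i ((1 - t) • y + t • y')
      = (1 - t) * (c i * f i y) + t * (c i * f i y') := by
    intro i hi; rw [h i hi y hy y' hy' t ht0 ht1]; ring
  simp only
  rw [Finset.sum_congr rfl hcong, Finset.sum_add_distrib, ← Finset.mul_sum, ← Finset.mul_sum]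
  ring

/-- If the two-hidden-layer ReLU network `f(x) = w₃ᵀ ReLU(W₂ ReLU(W₁ x + b₁) + b₂) + b₃`
is convex on `ℝ^d`, then for every isolated neuron `ν` of the second hidden layer
(`𝔛_ν ≠ ∅`), the output weight `w₃ ν` is nonnegative. -/
theorem lastLayer_nonneg_of_convex_twoHiddenLayer {d n₁ n₂ : ℕ}
    (W₁ : Fin n₁ → EuclideanSpace ℝ (Fin d)) (b₁ : Fin n₁ → ℝ)
    (W₂ : Fin n₂ → Fin n₁ → ℝ) (b₂ w₃ : Fin n₂ → ℝ) (b₃ : ℝ)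
    (hconv : ConvexOn ℝ Set.univ (netF W₁ b₁ W₂ b₂ w₃ b₃))
    (ν : Fin n₂)
    (hiso : (Xiso (zHidden W₁ b₁ W₂ b₂) (Sum.inr ν)).Nonempty) :
    0 ≤ w₃ ν := by
  obtain ⟨x, ε₀, hε₀, hx⟩ := hiso
  obtain ⟨hconst, -⟩ := hx ε₀ hε₀ le_rfl
  obtain ⟨-, hnc⟩ := hx (ε₀ / 4) (by linarith) (by linarith)
  simp only [zHidden, Sum.elim_inr] at hnc
  set B : Set (EuclideanSpace ℝ (Fin d)) := Metric.ball x ε₀ with hB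
  have hBconv : Convex ℝ B := convex_ball x ε₀
  have hsub : Metric.ball x (ε₀ / 4) ⊆ B := Metric.ball_subset_ball (by linarith)
  -- each relu ∘ z1 is segment-affine on B
  have h1 : ∀ ν', SegAff (fun y => relu (z1 W₁ b₁ ν' y)) B := fun ν' =>
    segAff_relu hBconv (segAff_z1 W₁ b₁ ν' B)
      (hconst (Sum.inl ν') (by simp))
  -- each z2 is segment-affine on B
  have h2 : ∀ μ, SegAff (z2 W₁ b₁ W₂ b₂ μ) B := by
    intro μ
    have h := segAff_sum Finset.univ (W₂ μ) (b₂ μ)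
      (fun ν' y => relu (z1 W₁ b₁ ν' y)) (fun i _ => h1 i)
    intro y hy y' hy' t ht0 ht1
    simpa [z2] using h y hy y' hy' t ht0 ht1
  -- each relu ∘ z2 μ, μ ≠ ν, is segment-affine on B
  have h2r : ∀ μ, μ ≠ ν → SegAff (fun y => relu (z2 W₁ b₁ W₂ b₂ μ y)) B := fun μ hμ =>
    segAff_relu hBconv (h2 μ)
      (hconst (Sum.inr μ) (by simp [hμ]))
  set R : EuclideanSpace ℝ (Fin d) → ℝ :=
    fun y => ∑ μ ∈ Finset.univ.erase ν, w₃ μ * relu (z2 W₁ b₁ W₂ b₂ μ y) + b₃ with hRdef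
  have hRaff : SegAff R B :=
    segAff_sum _ w₃ b₃ _ (fun μ hμ => h2r μ (Finset.ne_of_mem_erase hμ))
  have hsplit : ∀ y, netF W₁ b₁ W₂ b₂ w₃ b₃ y
      = w₃ ν * relu (z2 W₁ b₁ W₂ b₂ ν y) + R y := by
    intro y
    simp only [netF, hRdef]
    rw [← Finset.add_sum_erase Finset.univ _ (Finset.mem_univ ν)]
    ring
  -- extract witnesses of non-constant activation
  unfold ActConstOn at hnc
  push_neg at hnc
  obtain ⟨p, hp, q, hq, hpq⟩ := hnc
  obtain ⟨yP, hyP, yN, hyN, hcpos, hcneg⟩ :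
      ∃ yP ∈ Metric.ball x (ε₀ / 4), ∃ yN ∈ Metric.ball x (ε₀ / 4),
        0 < z2 W₁ b₁ W₂ b₂ ν yP ∧ z2 W₁ b₁ W₂ b₂ ν yN ≤ 0 := by
    rcases hpq with ⟨ha, hb⟩ | ⟨ha, hb⟩
    · exact ⟨p, hp, q, hq, ha, hb⟩
    · exact ⟨q, hq, p, hp, hb, ha⟩
  -- a point with strictly negative pre-activation
  set y' : EuclideanSpace ℝ (Fin d) := yN + (1/2 : ℝ) • (yN - yP) with hy'def
  have hy'B : y' ∈ B := by
    have hdN : dist yN x < ε₀ / 4 := Metric.mem_ball.mp hyN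
    have hdP : dist yP x < ε₀ / 4 := Metric.mem_ball.mp hyP
    have h0 : dist y' yN = (1/2 : ℝ) * dist yN yP := by
      rw [hy'def, dist_eq_norm, add_sub_cancel_left, norm_smul, dist_eq_norm]
      norm_num
    have h1 := dist_triangle y' yN x
    have h2 := dist_triangle yN x yP
    have h3 : dist x yP = dist yP x := dist_comm _ _
    have : dist y' x < ε₀ := by linarith
    exact Metric.mem_ball.mpr this
  have hcomb : yN = (1 - (1/3 : ℝ)) • y' + (1/3 : ℝ) • yP := by
    rw [hy'def]; module
  have hA := h2 ν y' hy'B yP (hsub hyP) (1/3) (by norm_num) (by norm_num)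
  rw [← hcomb] at hA
  set A := z2 W₁ b₁ W₂ b₂ ν y' with hAdef
  set c := z2 W₁ b₁ W₂ b₂ ν yP with hcdef
  have hAneg : A < 0 := by nlinarith [hA, hcneg, hcpos]
  set t₀ : ℝ := A / (A - c) with ht₀def
  have hAc : A - c < 0 := by linarith
  have ht0 : 0 < t₀ := div_pos_of_neg_of_neg hAneg hAc
  have hne : A - c ≠ 0 := hAc.ne
  have ht1 : t₀ < 1 := by
    have he : 1 - t₀ = (-c) / (A - c) := by rw [ht₀def]; field_simp; ring
    have hpos : 0 < (-c) / (A - c) := div_pos_of_neg_of_neg (by linarith) hAc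
    linarith
  have hzm : z2 W₁ b₁ W₂ b₂ ν ((1 - t₀) • y' + t₀ • yP) = 0 := by
    rw [h2 ν y' hy'B yP (hsub hyP) t₀ ht0.le ht1.le, ← hAdef, ← hcdef, ht₀def]
    field_simp
    ring
  have hcv := hconv.2 (Set.mem_univ y') (Set.mem_univ yP)
    (by linarith : (0:ℝ) ≤ 1 - t₀) ht0.le (by ring)
  rw [hsplit, hsplit, hsplit, hzm, relu_of_nonpos le_rfl, ← hAdef,
    relu_of_nonpos hAneg.le, ← hcdef, relu_of_pos hcpos] at hcv
  simp only [smul_eq_mul] at hcv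
  have hRm := hRaff y' hy'B yP (hsub hyP) t₀ ht0.le ht1.le
  have key : 0 ≤ t₀ * (w₃ ν * c) := by nlinarith [hcv, hRm]
  nlinarith [key, mul_pos ht0 hcpos]
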